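/- Let u ∈ ℤ_2^× and r ≥ 2 an integer. Then (ℤ_2 + u/2^r)^2 = ℤ_2/2^{r-1} + (u/2^r)^2 as subsets of ℚ_2; and for r = 1, (ℤ_2 + u/2)^2 = 2ℤ_2 + (u/2)^2. -/

import Mathlib

/-!
Expanding, `(v + u/2^(s+1))² = (2^s v² + u v)/2^s + (u/2^(s+1))²`, so everything reduces to the
image of `v ↦ 2^s v² + u v` on `ℤ_2`. For `s ≥ 1` this map is onto by Hensel's lemma, its
derivative `2^(s+1) v + u` being a unit. For `s = 0` its values `v (v + u)` are even, and every
even `2 w` is attained at `v = 2 y` with `2 y² + u y = w`, which Hensel's lemma solves again.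
-/

open Polynomial

namespace PadicInt

variable {p : ℕ} [Fact p.Prime]

@[simp, norm_cast]
theorem coe_two : ((2 : ℤ_[p]) : ℚ_[p]) = 2 :=
  rfl

theorem norm_add_eq_one_of_norm_lt_one {x u : ℤ_[p]} (hx : ‖x‖ < 1) (hu : IsUnit u) :
    ‖x + u‖ = 1 := by
  rw [isUnit_iff] at hu
  rw [norm_add_eq_max_of_ne (by rw [hu]; exact hx.ne), hu, max_eq_right hx.le]

/-- Hensel's lemma at the approximate root `u⁻¹ b`, where `2 c X + u` is a unit. -/
theorem exists_mul_sq_add_mul_eq {c u : ℤ_[p]} (hc : ‖c‖ < 1) (hu : IsUnit u) (b : ℤ_[p]) :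
    ∃ v : ℤ_[p], c * v ^ 2 + u * v = b := by
  set a : ℤ_[p] := ↑hu.unit⁻¹ * b
  have hua : u * a = b := by rw [← mul_assoc, hu.mul_val_inv, one_mul]
  set F : ℤ_[p][X] := C c * X ^ 2 + C u * X - C b
  have hF : F.aeval a = c * a ^ 2 := by
    simp [F, hua]
  have hF' : ‖F.derivative.aeval a‖ = 1 := by
    have : F.derivative.aeval a = 2 * c * a + u := by simp [F]; ring
    rw [this]
    refine norm_add_eq_one_of_norm_lt_one ?_ hu
    calc ‖2 * c * a‖ = ‖(2 : ℤ_[p])‖ * ‖c‖ * ‖a‖ := by rw [norm_mul, norm_mul]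
      _ ≤ 1 * ‖c‖ * 1 := by gcongr <;> exact norm_le_one _
      _ < 1 := by simpa using hc
  have hnorm : ‖F.aeval a‖ < ‖F.derivative.aeval a‖ ^ 2 := by
    rw [hF, hF', one_pow, norm_mul]
    calc ‖c‖ * ‖a ^ 2‖ ≤ ‖c‖ * 1 := by gcongr; exact norm_le_one _
      _ < 1 := by simpa using hc
  obtain ⟨v, hv, -⟩ := hensels_lemma hnorm
  exact ⟨v, by simpa [F, sub_eq_zero] using hv⟩

theorem two_dvd_sq_add_mul_of_isUnit {u : ℤ_[2]} (hu : IsUnit u) (v : ℤ_[2]) :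
    2 ∣ v ^ 2 + u * v := by
  have hker : ∀ x : ℤ_[2], 2 ∣ x ↔ toZMod x = 0 := by
    intro x
    rw [← RingHom.mem_ker, ker_toZMod, maximalIdeal_eq_span_p, Ideal.mem_span_singleton]
    norm_num
  rw [hker, map_add, map_pow, map_mul]
  have key : ∀ x y : ZMod 2, y ≠ 0 → x ^ 2 + y * x = 0 := by decide
  exact key _ _ (hu.map toZMod).ne_zero

end PadicInt

theorem sq_add_div_two_pow_succ {K : Type*} [Field K] [CharZero K] (s : ℕ) (u v : K) :
    (v + u / 2 ^ (s + 1)) ^ 2 = (2 ^ s * v ^ 2 + u * v) / 2 ^ s + (u / 2 ^ (s + 1)) ^ 2 := by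
  field_simp
  ring

/-- For `u ∈ ℤ_2^×`: if `r ≥ 2` then, as subsets of `ℚ_2`,
`(ℤ_2 + u/2^r)² = ℤ_2/2^{r-1} + (u/2^r)²`; and for `r = 1`,
`(ℤ_2 + u/2)² = 2ℤ_2 + (u/2)²`. -/
theorem stmt_18 (u : ℤ_[2]) (hu : IsUnit u) :
    (∀ r : ℕ, 2 ≤ r →
      {z : ℚ_[2] | ∃ v : ℤ_[2], z = ((v : ℚ_[2]) + (u : ℚ_[2]) / 2 ^ r) ^ 2}
        = {z : ℚ_[2] | ∃ w : ℤ_[2],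
            z = (w : ℚ_[2]) / 2 ^ (r - 1) + ((u : ℚ_[2]) / 2 ^ r) ^ 2}) ∧
    ({z : ℚ_[2] | ∃ v : ℤ_[2], z = ((v : ℚ_[2]) + (u : ℚ_[2]) / 2) ^ 2}
        = {z : ℚ_[2] | ∃ w : ℤ_[2], z = 2 * (w : ℚ_[2]) + ((u : ℚ_[2]) / 2) ^ 2}) := by
  have two_pow_norm_lt_one : ∀ s : ℕ, ‖(2 : ℤ_[2]) ^ (s + 1)‖ < 1 := fun s =>
    (PadicInt.norm_lt_one_iff_dvd _).2 (by simp [dvd_pow_self (2 : ℤ_[2]) s.succ_ne_zero])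
  constructor
  · intro r hr
    obtain ⟨s, rfl⟩ : ∃ s, r = s + 1 + 1 := ⟨r - 2, by omega⟩
    ext z
    simp only [Set.mem_ofPred_eq, Nat.add_sub_cancel]
    constructor
    · rintro ⟨v, rfl⟩
      exact ⟨2 ^ (s + 1) * v ^ 2 + u * v, by push_cast; exact sq_add_div_two_pow_succ _ _ _⟩
    · rintro ⟨w, rfl⟩
      obtain ⟨v, rfl⟩ := PadicInt.exists_mul_sq_add_mul_eq (two_pow_norm_lt_one s) hu w
      exact ⟨v, by push_cast; exact (sq_add_div_two_pow_succ _ _ _).symm⟩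
  · ext z
    simp only [Set.mem_ofPred_eq]
    constructor
    · rintro ⟨v, rfl⟩
      obtain ⟨w, hw⟩ := PadicInt.two_dvd_sq_add_mul_of_isUnit hu v
      refine ⟨w, ?_⟩
      calc _ = ((v ^ 2 + u * v : ℤ_[2]) : ℚ_[2]) + ((u : ℚ_[2]) / 2) ^ 2 := by
            push_cast; simpa using sq_add_div_two_pow_succ 0 (u : ℚ_[2]) v
        _ = _ := by rw [hw]; push_cast; ring
    · rintro ⟨w, rfl⟩
      obtain ⟨y, rfl⟩ :=
        PadicInt.exists_mul_sq_add_mul_eq (by simpa using two_pow_norm_lt_one 0) hu w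
      refine ⟨2 * y, ?_⟩
      push_cast
      field_simp
      ring
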